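/- arXiv:2102.06538 — 4 statements merged into one kernel-verified Lean document; each statement's English description precedes it below -/
import Mathlib

section
/- Let W = (ω_1,…,ω_n) be an integral basis of A, and let e ∈ K[x] and M ∈ K[x]^{n×n} satisfy eW′ = MW with gcd(e, m_{1,1},…,m_{n,n}) = 1. If a ∈ K̄ is a root of e, then there exists an element ω of W such that a is a branch point of ω. -/
noncomputable section
open scoped Classical

open Polynomial

/-- Termwise derivative (w.r.t. `x`) of a generalized (Hahn/Puiseux) series in `x - a`:
the exponent-`q` coefficient of `P'` is `(q+1)` times the exponent-`(q+1)` coefficient of `P`. -/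
def hderiv {F : Type} [Field F] (P : HahnSeries ℚ F) : HahnSeries ℚ F where
  coeff q := ((q + 1 : ℚ) : F) * P.coeff (q + 1)
  isPWO_support' := by
    have hsub : (Function.support fun q : ℚ => ((q + 1 : ℚ) : F) * P.coeff (q + 1))
        ⊆ (fun q : ℚ => q - 1) '' P.support := by
      intro q hq
      refine ⟨q + 1, ?_, by ring⟩
      intro h0
      simp [Function.mem_support, h0] at hq
    exact (P.isPWO_support.image_of_monotoneOn
      (fun x _ y _ hxy => by simpa using hxy)).mono hsub

/-- The valuation of a generalized (Hahn/Puiseux) series: the least exponent occurring,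
and `⊤` for the zero series. -/
def hval {F : Type} [Field F] (P : HahnSeries ℚ F) : WithTop ℚ :=
  if h : P = 0 then ⊤
  else ((P.isWF_support.min (HahnSeries.support_nonempty_iff.mpr h) : ℚ) : WithTop ℚ)

/-- A series is ramified if some exponent in its support is not an integer. -/
def Ramified {F : Type} [Field F] (P : HahnSeries ℚ F) : Prop :=
  ∃ q ∈ P.support, ∀ z : ℤ, (z : ℚ) ≠ q

/-- The set of fractional (non-integer) exponents occurring in a series. -/
def fracSupport {F : Type} [Field F] (P : HahnSeries ℚ F) : Set ℚ :=
  {q | q ∈ P.support ∧ ∀ z : ℤ, (z : ℚ) ≠ q}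

/-- The minimal fractional exponent `δ(P)` of a series; `⊤` if `P` is not ramified. -/
def delta {F : Type} [Field F] (P : HahnSeries ℚ F) : WithTop ℚ :=
  if h : (fracSupport P).Nonempty then
    (((P.isWF_support.mono (fun q hq => hq.1)).min h : ℚ) : WithTop ℚ)
  else ⊤

/-- A Hahn series over `ℚ` is a Puiseux series if its exponents have a common denominator. -/
def IsPuiseux {F : Type} [Field F] (P : HahnSeries ℚ F) : Prop :=
  ∃ r : ℕ, 0 < r ∧ ∀ q ∈ P.support, ∃ z : ℤ, (z : ℚ) / r = q

/-! ### The algebraic function field `A = K(x)[y]/⟨m⟩` -/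

/-- The canonical image in `A = K(x)[y]/⟨m⟩` of a polynomial `p ∈ K[x]`. -/
def toA {K : Type} [Field K] (m : Polynomial (RatFunc K)) (p : Polynomial K) :
    AdjoinRoot m :=
  algebraMap (RatFunc K) (AdjoinRoot m) (algebraMap (Polynomial K) (RatFunc K) p)

/-- `D` is the derivation on `A = K(x)[y]/⟨m⟩` extending `d/dx` on `K(x)`:
it is additive, satisfies the Leibniz rule, and restricts to `d/dx` on `K[x]`
(hence, being a derivation on a field, on all of `K(x)`). -/
structure IsDerivationOnA {K : Type} [Field K] (m : Polynomial (RatFunc K))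
    (D : AdjoinRoot m → AdjoinRoot m) : Prop where
  map_add : ∀ f g, D (f + g) = D f + D g
  leibniz : ∀ f g, D (f * g) = f * D g + g * D f
  map_poly : ∀ p : Polynomial K, D (toA m p) = toA m (Polynomial.derivative p)

/-- `W` is a basis of `A` as a vector space over `K(x)`. -/
def IsKxBasis {K : Type} [Field K] {m : Polynomial (RatFunc K)}
    (W : Fin m.natDegree → AdjoinRoot m) : Prop :=
  LinearIndependent (RatFunc K) W ∧ Submodule.span (RatFunc K) (Set.range W) = ⊤

/-- `e W′ = M W` componentwise. -/
def DerivRel {K : Type} [Field K] {m : Polynomial (RatFunc K)}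
    (D : AdjoinRoot m → AdjoinRoot m) (W : Fin m.natDegree → AdjoinRoot m)
    (e : Polynomial K) (M : Matrix (Fin m.natDegree) (Fin m.natDegree) (Polynomial K)) : Prop :=
  ∀ i, toA m e * D (W i) = ∑ j, toA m (M i j) * W j

/-- `gcd(e, m₁₁, …, mₙₙ) = 1`: the only common divisors of `e` and the entries of `M`
are units. -/
def GcdOne {K : Type} [Field K] {n : ℕ}
    (e : Polynomial K) (M : Matrix (Fin n) (Fin n) (Polynomial K)) : Prop :=
  ∀ p : Polynomial K, p ∣ e → (∀ i j, p ∣ M i j) → IsUnit p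

/-! ### Puiseux expansions around a point `a` of the algebraic closure -/

/-- The family of the `n` distinct `K(x)`-embeddings of `A = K(x)[y]/⟨m⟩` into the field of
Puiseux series around a point `a`: each embedding is a ring homomorphism into the Hahn series
field whose values are Puiseux series, sending constants `c ∈ K` to constant series and the
rational function `x` to `a + (x - a)`, i.e. to the series `a + t` where `t` stands
for `x - a`. -/
structure EmbFamily (K F : Type) [Field K] [Field F] [Algebra K F]
    (m : Polynomial (RatFunc K)) (a : F) where
  emb : Fin m.natDegree → (AdjoinRoot m →+* HahnSeries ℚ F)
  emb_injective : Function.Injective emb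
  emb_C : ∀ i (c : K), emb i (toA m (Polynomial.C c)) = HahnSeries.single 0 (algebraMap K F c)
  emb_X : ∀ i, emb i (toA m Polynomial.X) =
    HahnSeries.single 0 a + HahnSeries.single 1 1
  emb_puiseux : ∀ i f, IsPuiseux (emb i f)

/-- The embeddings around `a` are differential homomorphisms: they intertwine the derivation
`D` on `A` with the termwise derivative of series. -/
def IsDiffFamily {K F : Type} [Field K] [Field F] [Algebra K F]
    {m : Polynomial (RatFunc K)} {a : F} (D : AdjoinRoot m → AdjoinRoot m)
    (σ : EmbFamily K F m a) : Prop :=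
  ∀ i f, σ.emb i (D f) = hderiv (σ.emb i f)

/-- `f ∈ A` is locally integral at `a`, i.e. `val_a(f) ≥ 0`: all Puiseux series associated
to `f` around `a` have nonnegative valuation. -/
def LocIntegralAt {K F : Type} [Field K] [Field F] [Algebra K F]
    {m : Polynomial (RatFunc K)} {a : F} (σ : EmbFamily K F m a)
    (f : AdjoinRoot m) : Prop :=
  ∀ i, 0 ≤ hval (σ.emb i f)

/-- `a` is a branch point of `f ∈ A`: one of the Puiseux series associated to `f` around `a`
is ramified. -/
def IsBranchPointOf {K F : Type} [Field K] [Field F] [Algebra K F]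
    {m : Polynomial (RatFunc K)} {a : F} (σ : EmbFamily K F m a)
    (f : AdjoinRoot m) : Prop :=
  ∃ i, Ramified (σ.emb i f)

/-- `f ∈ A` is (globally) integral: locally integral at every point `a` of the algebraic
closure of `K` (given the system `σ` of Puiseux expansions around each point). -/
def IntegralElem {K : Type} [Field K] {m : Polynomial (RatFunc K)}
    (σ : ∀ a : AlgebraicClosure K, EmbFamily K (AlgebraicClosure K) m a)
    (f : AdjoinRoot m) : Prop :=
  ∀ a, LocIntegralAt (σ a) f

/-- `W` is an integral basis of `A`: a `K(x)`-vector-space basis consisting of integral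
elements such that every integral element is a `K[x]`-linear combination of `W`. -/
def IsIntegralBasis {K : Type} [Field K] {m : Polynomial (RatFunc K)}
    (σ : ∀ a : AlgebraicClosure K, EmbFamily K (AlgebraicClosure K) m a)
    (W : Fin m.natDegree → AdjoinRoot m) : Prop :=
  IsKxBasis W ∧ (∀ i, IntegralElem σ (W i)) ∧
    ∀ f, IntegralElem σ f → ∃ c : Fin m.natDegree → Polynomial K,
      f = ∑ i, toA m (c i) * W i

/-- The rational function `r ∈ K(x)` has no pole at `a`: `r = p/q` with `q(a) ≠ 0`. -/
def NoPoleAt {K F : Type} [Field K] [Field F] [Algebra K F] (a : F) (r : RatFunc K) : Prop :=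
  ∃ p q : Polynomial K, Polynomial.aeval a q ≠ 0 ∧
    r * algebraMap (Polynomial K) (RatFunc K) q = algebraMap (Polynomial K) (RatFunc K) p

/-- `W` is a local integral basis of `A` at `a`: a `K(x)`-vector-space basis consisting of
elements that are locally integral at `a`, such that every element of `A` that is locally
integral at `a` is a linear combination of `W` with coefficients in `K(x)_a` (rational
functions without a pole at `a`). -/
def IsLocalIntegralBasisAt {K F : Type} [Field K] [Field F] [Algebra K F]
    {m : Polynomial (RatFunc K)} {a : F} (σ : EmbFamily K F m a)
    (W : Fin m.natDegree → AdjoinRoot m) : Prop :=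
  IsKxBasis W ∧ (∀ i, LocIntegralAt σ (W i)) ∧
    ∀ f, LocIntegralAt σ f → ∃ c : Fin m.natDegree → RatFunc K,
      (∀ i, NoPoleAt a (c i)) ∧ f = ∑ i, algebraMap (RatFunc K) (AdjoinRoot m) (c i) * W i

/-!
Suppose no `ω ∈ W` has a branch point at `a`, and let `p` be the minimal polynomial of `a` over
`K`, so `p ∣ e`. Twisting the coefficients of Puiseux series by a `K`-automorphism of `K̄` permutes
the expansions, so no `ω ∈ W` branches at any root `c` of `p` either. At such a `c` every expansion
of `ωᵢ` has nonnegative integer exponents, so `ωᵢ′` has no pole there, while `e` vanishes at `c`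
and `p` has a simple zero (characteristic zero). Away from the roots of `p`, `eωᵢ′ = ∑ mᵢⱼωⱼ` is
integral. Hence `eωᵢ′/p` is integral, i.e. a `K[x]`-combination of `W`, and comparing coordinates
gives `p ∣ mᵢⱼ` for all `i, j`, contradicting `gcd(e, M) = 1`.
-/

namespace HahnSeries

theorem le_orderTop_add {Γ R : Type*} [LinearOrder Γ] [AddMonoid R] {x y : HahnSeries Γ R}
    {g : WithTop Γ} (hx : g ≤ x.orderTop) (hy : g ≤ y.orderTop) : g ≤ (x + y).orderTop :=
  (le_min hx hy).trans min_orderTop_le_orderTop_add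

theorem le_orderTop_sum {Γ R ι : Type*} [LinearOrder Γ] [AddCommMonoid R] {s : Finset ι}
    {f : ι → HahnSeries Γ R} {g : WithTop Γ} (h : ∀ i ∈ s, g ≤ (f i).orderTop) :
    g ≤ (∑ i ∈ s, f i).orderTop :=
  Finset.sum_induction f (g ≤ ·.orderTop) (fun _ _ => le_orderTop_add) (by simp) h

section MapRingHom

variable {Γ R S : Type*} [AddCommMonoid Γ] [PartialOrder Γ] [IsOrderedCancelAddMonoid Γ]
  [Semiring R] [Semiring S]

def mapRingHom (f : R →+* S) : HahnSeries Γ R →+* HahnSeries Γ S where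
  toFun x := x.map f
  map_one' := HahnSeries.map_one f.toMonoidWithZeroHom
  map_mul' _ _ := HahnSeries.map_mul f.toNonUnitalRingHom
  map_zero' := HahnSeries.map_zero f.toZeroHom
  map_add' _ _ := HahnSeries.map_add f.toAddMonoidHom

theorem mapRingHom_injective {f : R →+* S} (hf : Function.Injective f) :
    Function.Injective (mapRingHom f : HahnSeries Γ R →+* HahnSeries Γ S) := fun x y h => by
  ext g
  exact hf (congrArg (coeff · g) h)

theorem support_mapRingHom_subset (f : R →+* S) (x : HahnSeries Γ R) :
    (mapRingHom f x).support ⊆ x.support :=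
  support_map_subset x f.toZeroHom

theorem mapRingHom_single (f : R →+* S) (g : Γ) (r : R) :
    mapRingHom f (single g r) = single g (f r) :=
  HahnSeries.map_single f.toZeroHom

end MapRingHom

end HahnSeries

open HahnSeries Polynomial

section

variable {F : Type} [Field F]

theorem hval_eq_orderTop (P : HahnSeries ℚ F) : hval P = P.orderTop := rfl

theorem zero_le_hval_hderiv {P : HahnSeries ℚ F} (h0 : 0 ≤ hval P) (hP : ¬ Ramified P) :
    0 ≤ hval (hderiv P) := by
  refine le_orderTop_iff_forall.mpr fun j hj => ?_
  by_contra hne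
  change ((j + 1 : ℚ) : F) * P.coeff (j + 1) ≠ 0 at hne
  have hmem : j + 1 ∈ P.support := right_ne_zero_of_mul hne
  obtain ⟨z, hz⟩ : ∃ z : ℤ, (z : ℚ) = j + 1 := by
    by_contra! hz
    exact hP ⟨_, hmem, hz⟩
  have hz0 : 0 ≤ z := by
    by_contra! hneg
    exact hmem (le_orderTop_iff_forall.mp h0 _ (by rw [← hz]; exact_mod_cast hneg))
  have hz1 : z ≠ 0 := by
    rintro rfl
    exact hne (by rw [← hz]; simp)
  have hj1 : (1 : ℚ) ≤ j + 1 := hz ▸ (by exact_mod_cast (by omega : 1 ≤ z))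
  have hj0 : j < 0 := by exact_mod_cast hj
  linarith

end

namespace Polynomial

variable {F : Type*} [Field F]

/-- `g(c + t)`, the expansion of `g` around `c` as a series in `t = x - c`. -/
def toHahnSeriesAt (c : F) : F[X] →+* HahnSeries ℚ F :=
  eval₂RingHom HahnSeries.C (HahnSeries.C c + single 1 1)

theorem toHahnSeriesAt_X_sub_C (c : F) : toHahnSeriesAt c (X - C c) = single 1 1 := by
  simp [toHahnSeriesAt]

theorem zero_le_orderTop_toHahnSeriesAt (c : F) (g : F[X]) :
    0 ≤ (toHahnSeriesAt c g).orderTop := by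
  have hC (r : F) : 0 ≤ (HahnSeries.C r : HahnSeries ℚ F).orderTop := orderTop_single_le
  induction g using Polynomial.induction_on with
  | C r => simpa [toHahnSeriesAt] using hC r
  | add p q hp hq => rw [map_add]; exact le_orderTop_add hp hq
  | monomial n r ih =>
    rw [pow_succ, ← mul_assoc, map_mul, orderTop_mul]
    refine add_nonneg ih ?_
    simpa [toHahnSeriesAt] using le_orderTop_add (hC c) (orderTop_single_le.trans' (by norm_num))

theorem orderTop_toHahnSeriesAt_of_eval_ne_zero {c : F} {g : F[X]} (hg : g.eval c ≠ 0) :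
    (toHahnSeriesAt c g).orderTop = 0 := by
  rw [← modByMonic_add_div g (X - C c), modByMonic_X_sub_C_eq_C_eval, map_add, map_mul,
    toHahnSeriesAt_X_sub_C]
  have hconst : (toHahnSeriesAt c (C (g.eval c))).orderTop = 0 := by
    simp only [toHahnSeriesAt, coe_eval₂RingHom, eval₂_C, HahnSeries.C_apply]
    exact_mod_cast orderTop_single hg
  refine (orderTop_add_eq_left ?_).trans hconst
  rw [hconst, orderTop_mul, orderTop_single one_ne_zero]
  exact zero_lt_one.trans_le (le_add_of_nonneg_right (zero_le_orderTop_toHahnSeriesAt c _))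

theorem orderTop_toHahnSeriesAt {g : F[X]} (hg : g ≠ 0) (c : F) :
    (toHahnSeriesAt c g).orderTop = g.rootMultiplicity c := by
  obtain ⟨h, hgh, hndvd⟩ := g.exists_eq_pow_rootMultiplicity_mul_and_not_dvd hg c
  rw [dvd_iff_isRoot] at hndvd
  conv_lhs => rw [hgh]
  rw [map_mul, map_pow, toHahnSeriesAt_X_sub_C, orderTop_mul,
    orderTop_toHahnSeriesAt_of_eval_ne_zero hndvd, add_zero, single_pow,
    orderTop_single (pow_ne_zero _ one_ne_zero)]
  simp

theorem toHahnSeriesAt_map {F' : Type*} [Field F'] (ψ : F →+* F') (c : F) (g : F[X]) :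
    HahnSeries.mapRingHom ψ (toHahnSeriesAt c g) = toHahnSeriesAt (ψ c) (g.map ψ) := by
  have : (HahnSeries.mapRingHom ψ).comp (toHahnSeriesAt c) =
      (toHahnSeriesAt (ψ c)).comp (mapRingHom ψ) := by
    ext <;> simp [toHahnSeriesAt, HahnSeries.mapRingHom_single]
  exact RingHom.congr_fun this g

theorem exists_eq_of_injective_of_isRoot {R ι : Type*} [CommRing R] [IsDomain R]
    [Fintype ι] {p : R[X]} (hp : p ≠ 0) {v : ι → R} (hv : Function.Injective v)
    (hroots : ∀ i, p.IsRoot (v i)) (hcard : p.natDegree ≤ Fintype.card ι) {x : R}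
    (hx : p.IsRoot x) : ∃ i, v i = x := by
  classical
  have hsub : Finset.univ.image v ⊆ p.roots.toFinset := by
    simpa [Finset.subset_iff, hp] using hroots
  have heq : Finset.univ.image v = p.roots.toFinset := by
    refine Finset.eq_of_subset_of_card_le hsub ?_
    calc p.roots.toFinset.card ≤ Multiset.card p.roots := Multiset.toFinset_card_le _
      _ ≤ p.natDegree := card_roots' p
      _ ≤ Fintype.card ι := hcard
      _ = (Finset.univ.image v).card := by
        rw [Finset.card_image_of_injective _ hv, Finset.card_univ]
  have hmem : x ∈ Finset.univ.image v := heq ▸ Multiset.mem_toFinset.mpr ((mem_roots hp).mpr hx)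
  simpa using hmem

end Polynomial

theorem AdjoinRoot.isRoot_map_comp_of {R S : Type*} [CommRing R] [CommRing S] {f : R[X]}
    (χ : AdjoinRoot f →+* S) : (f.map (χ.comp (of f))).IsRoot (χ (root f)) := by
  rw [← Polynomial.map_map]
  exact (isRoot_root f).map

section FunctionField

variable {K : Type} [Field K] {m : Polynomial (RatFunc K)}

theorem ringHom_ext_of_toA {S : Type*} [CommRing S] {χ₁ χ₂ : AdjoinRoot m →+* S}
    (h : ∀ q, χ₁ (toA m q) = χ₂ (toA m q))
    (hroot : χ₁ (AdjoinRoot.root m) = χ₂ (AdjoinRoot.root m)) : χ₁ = χ₂ :=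
  AdjoinRoot.ringHom_ext (IsLocalization.ringHom_ext (nonZeroDivisors K[X]) (RingHom.ext h)) hroot

theorem toA_ne_zero [Fact (Irreducible m)] {p : K[X]} (hp : p ≠ 0) : toA m p ≠ 0 := by
  simpa [toA] using hp

namespace EmbFamily

variable {F : Type} [Field F] [Algebra K F] {a : F} (σ : EmbFamily K F m a)

theorem emb_toA (k : Fin m.natDegree) (q : K[X]) :
    σ.emb k (toA m q) = toHahnSeriesAt a (q.map (algebraMap K F)) := by
  have : (σ.emb k).comp
      ((algebraMap (RatFunc K) (AdjoinRoot m)).comp (algebraMap K[X] (RatFunc K))) =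
      (toHahnSeriesAt a).comp (mapRingHom (algebraMap K F)) := by
    refine Polynomial.ringHom_ext (fun c => ?_) ?_
    · simpa [toA, toHahnSeriesAt] using σ.emb_C k c
    · simpa [toA, toHahnSeriesAt] using σ.emb_X k
  exact RingHom.congr_fun this q

theorem hval_emb_toA (k : Fin m.natDegree) {q : K[X]} (hq : q ≠ 0) :
    hval (σ.emb k (toA m q)) = (q.map (algebraMap K F)).rootMultiplicity a := by
  rw [emb_toA]
  exact orderTop_toHahnSeriesAt ((Polynomial.map_ne_zero_iff (algebraMap K F).injective).mpr hq) a

theorem zero_le_hval_emb_toA (k : Fin m.natDegree) (q : K[X]) : 0 ≤ hval (σ.emb k (toA m q)) := by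
  rw [emb_toA]
  exact zero_le_orderTop_toHahnSeriesAt a _

theorem exists_emb_eq_mapRingHom_comp {b : F} (σ' : EmbFamily K F m b) (ψ : F →ₐ[K] F)
    (hψ : ψ a = b) (k : Fin m.natDegree) :
    ∃ k', σ'.emb k = (HahnSeries.mapRingHom (ψ : F →+* F)).comp (σ.emb k') := by
  set χ : Fin m.natDegree → (AdjoinRoot m →+* HahnSeries ℚ F) :=
    fun k' => (HahnSeries.mapRingHom (ψ : F →+* F)).comp (σ.emb k')
  have hχ (k' : Fin m.natDegree) (q : K[X]) : χ k' (toA m q) = σ'.emb k (toA m q) := by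
    simp only [χ, RingHom.comp_apply, emb_toA, toHahnSeriesAt_map, Polynomial.map_map]
    rw [show (ψ : F →+* F) a = b from hψ, ψ.comp_algebraMap]
  have hinj : Function.Injective fun k' => χ k' (AdjoinRoot.root m) := fun k₁ k₂ h =>
    σ.emb_injective <| RingHom.ext fun f => HahnSeries.mapRingHom_injective ψ.injective <|
      RingHom.congr_fun (ringHom_ext_of_toA (fun q => (hχ k₁ q).trans (hχ k₂ q).symm) h) f
  -- the `n` distinct values `χ k' (root m)` are roots of `m` over the series field, so they
  -- exhaust its roots
  set β := (σ'.emb k).comp (AdjoinRoot.of m)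
  have hβ (χ' : AdjoinRoot m →+* HahnSeries ℚ F) (h : ∀ q, χ' (toA m q) = σ'.emb k (toA m q)) :
      χ'.comp (AdjoinRoot.of m) = β :=
    IsLocalization.ringHom_ext (nonZeroDivisors K[X]) (RingHom.ext h)
  have hm : m ≠ 0 := ne_zero_of_natDegree_gt k.pos
  obtain ⟨k', hk'⟩ := (m.map β).exists_eq_of_injective_of_isRoot
    ((Polynomial.map_ne_zero_iff β.injective).mpr hm) hinj
    (fun k' => hβ (χ k') (hχ k') ▸ AdjoinRoot.isRoot_map_comp_of (χ k'))
    (by rw [natDegree_map_eq_of_injective β.injective, Fintype.card_fin])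
    (AdjoinRoot.isRoot_map_comp_of (σ'.emb k))
  exact ⟨k', ringHom_ext_of_toA (fun q => (hχ k' q).symm) hk'.symm⟩

end EmbFamily

theorem IsBranchPointOf.of_algHom {F : Type} [Field F] [Algebra K F] {a b : F}
    {σ : EmbFamily K F m a} {σ' : EmbFamily K F m b} (ψ : F →ₐ[K] F) (hψ : ψ a = b)
    {f : AdjoinRoot m} (h : IsBranchPointOf σ' f) : IsBranchPointOf σ f := by
  obtain ⟨k, q, hq, hfrac⟩ := h
  obtain ⟨k', hk'⟩ := σ.exists_emb_eq_mapRingHom_comp σ' ψ hψ k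
  rw [hk'] at hq
  exact ⟨k', q, support_mapRingHom_subset _ _ hq, hfrac⟩

theorem locIntegralAt_of_hval_le_hval_mul [Fact (Irreducible m)] {F : Type} [Field F]
    [Algebra K F] {a : F} (σ : EmbFamily K F m a) {g f : AdjoinRoot m} (hg : g ≠ 0)
    (h : ∀ k, hval (σ.emb k g) ≤ hval (σ.emb k (g * f))) : LocIntegralAt σ f := by
  intro k
  have hfin : hval (σ.emb k g) ≠ ⊤ := orderTop_ne_top.mpr ((_root_.map_ne_zero _).mpr hg)
  have := h k
  rw [map_mul, hval_eq_orderTop, hval_eq_orderTop, orderTop_mul] at this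
  rw [hval_eq_orderTop] at hfin ⊢
  exact (WithTop.add_le_add_iff_left hfin).mp (by simpa using this)

theorem IsIntegralBasis.dvd_of_toA_mul_eq_sum
    {σ : ∀ a : AlgebraicClosure K, EmbFamily K (AlgebraicClosure K) m a}
    {W : Fin m.natDegree → AdjoinRoot m} (hW : IsIntegralBasis σ W) {f : AdjoinRoot m}
    (hf : IntegralElem σ f) {p : K[X]} {c : Fin m.natDegree → K[X]}
    (h : toA m p * f = ∑ j, toA m (c j) * W j) (j : Fin m.natDegree) : p ∣ c j := by
  obtain ⟨d, rfl⟩ := hW.2.2 f hf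
  have hcoord : ∑ j, algebraMap K[X] (RatFunc K) (p * d j) • W j =
      ∑ j, algebraMap K[X] (RatFunc K) (c j) • W j := by
    simpa [toA, Algebra.smul_def, Finset.mul_sum, mul_assoc] using h
  exact ⟨d j, (RatFunc.algebraMap_injective K
    (Fintype.linearIndependent_iffₛ.mp hW.1.1 _ _ hcoord j)).symm⟩

theorem integralElem_inv_mul_deriv [Fact (Irreducible m)] {D : AdjoinRoot m → AdjoinRoot m}
    {σ : ∀ a : AlgebraicClosure K, EmbFamily K (AlgebraicClosure K) m a}
    (hσ : ∀ a, IsDiffFamily D (σ a)) {W : Fin m.natDegree → AdjoinRoot m}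
    (hW : IsIntegralBasis σ W) {e : K[X]} {M : Matrix (Fin m.natDegree) (Fin m.natDegree) K[X]}
    (hrel : DerivRel D W e M) {p : K[X]} (hp : p.Separable) (hpe : p ∣ e) {i : Fin m.natDegree}
    (hunram : ∀ c, aeval c p = 0 → ¬ IsBranchPointOf (σ c) (W i)) :
    IntegralElem σ ((toA m p)⁻¹ * (toA m e * D (W i))) := by
  have hp0 : toA m p ≠ 0 := toA_ne_zero hp.ne_zero
  have hp_map : p.map (algebraMap K (AlgebraicClosure K)) ≠ 0 :=
    (Polynomial.map_ne_zero_iff (algebraMap K _).injective).mpr hp.ne_zero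
  intro c
  refine locIntegralAt_of_hval_le_hval_mul (σ c) hp0 fun k => ?_
  rw [mul_inv_cancel_left₀ hp0]
  by_cases hc : aeval c p = 0
  · have hroot : (p.map (algebraMap K _)).IsRoot c := by rwa [IsRoot, eval_map_algebraMap]
    have hp_val : hval ((σ c).emb k (toA m p)) = 1 := by
      rw [(σ c).hval_emb_toA k hp.ne_zero]
      exact_mod_cast le_antisymm (rootMultiplicity_le_one_of_separable hp.map c)
        ((rootMultiplicity_pos hp_map).mpr hroot)
    have he1 : 1 ≤ hval ((σ c).emb k (toA m e)) := by
      rcases eq_or_ne e 0 with rfl | he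
      · simp [toA, hval_eq_orderTop]
      rw [(σ c).hval_emb_toA k he]
      exact_mod_cast (rootMultiplicity_pos ((Polynomial.map_ne_zero_iff
        (algebraMap K (AlgebraicClosure K)).injective).mpr he)).mpr
        (by obtain ⟨u, rfl⟩ := hpe; simp [IsRoot, eval_map_algebraMap, hc])
    have hder : 0 ≤ hval (hderiv ((σ c).emb k (W i))) :=
      zero_le_hval_hderiv (hW.2.1 i c k) fun hr => hunram c hc ⟨k, hr⟩
    rw [hp_val, map_mul, hσ c k (W i), hval_eq_orderTop, orderTop_mul]
    simpa [hval_eq_orderTop] using add_le_add he1 hder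
  · have hp_val : hval ((σ c).emb k (toA m p)) = 0 := by
      rw [(σ c).hval_emb_toA k hp.ne_zero, rootMultiplicity_eq_zero]
      · rfl
      · rwa [IsRoot, eval_map_algebraMap]
    rw [hp_val, hrel i, map_sum]
    refine le_orderTop_sum fun j _ => ?_
    rw [map_mul, orderTop_mul]
    exact add_nonneg ((σ c).zero_le_hval_emb_toA k _) (hW.2.1 j c k)

end FunctionField

theorem exists_branch_point_of_root_of_e_general {K : Type} [Field K] [CharZero K]
    (m : Polynomial (RatFunc K)) [Fact (Irreducible m)]
    (D : AdjoinRoot m → AdjoinRoot m)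
    (σ : ∀ a : AlgebraicClosure K, EmbFamily K (AlgebraicClosure K) m a)
    (hσ : ∀ a, IsDiffFamily D (σ a))
    (W : Fin m.natDegree → AdjoinRoot m) (hW : IsIntegralBasis σ W)
    (e : Polynomial K) (M : Matrix (Fin m.natDegree) (Fin m.natDegree) (Polynomial K))
    (hrel : DerivRel D W e M) (hgcd : GcdOne e M)
    (a : AlgebraicClosure K) (ha : Polynomial.aeval a e = 0) :
    ∃ i, IsBranchPointOf (σ a) (W i) := by
  by_contra! hbr
  have ha_int : IsIntegral K a := Algebra.IsIntegral.isIntegral a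
  have hp : Irreducible (minpoly K a) := minpoly.irreducible ha_int
  have hpe : minpoly K a ∣ e := minpoly.dvd K a ha
  have hunram (i : Fin m.natDegree) (c : AlgebraicClosure K) (hc : aeval c (minpoly K a) = 0) :
      ¬ IsBranchPointOf (σ c) (W i) := fun h => by
    obtain ⟨ψ, hψ⟩ := minpoly.exists_algEquiv_of_root' ha_int.isAlgebraic hc
    exact hbr i (h.of_algHom (ψ : AlgebraicClosure K →ₐ[K] AlgebraicClosure K) hψ)
  refine hp.not_isUnit (hgcd _ hpe fun i j => hW.dvd_of_toA_mul_eq_sum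
    (integralElem_inv_mul_deriv hσ hW hrel hp.separable hpe (hunram i)) ?_ j)
  rw [mul_inv_cancel_left₀ (toA_ne_zero hp.ne_zero)]
  exact hrel i

/-- Let `W = (ω₁,…,ωₙ)` be an integral basis of `A`, and let `e ∈ K[x]` and
`M ∈ K[x]^{n×n}` satisfy `eW′ = MW` with `gcd(e, m₁₁,…,mₙₙ) = 1`. If `a ∈ K̄` is a root
of `e`, then there exists an element `ω` of `W` such that `a` is a branch point of `ω`. -/
theorem exists_branch_point_of_root_of_e {K : Type} [Field K] [CharZero K]
    (m : Polynomial (RatFunc K)) [Fact (Irreducible m)]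
    (D : AdjoinRoot m → AdjoinRoot m) (hD : IsDerivationOnA m D)
    (σ : ∀ a : AlgebraicClosure K, EmbFamily K (AlgebraicClosure K) m a)
    (hσ : ∀ a, IsDiffFamily D (σ a))
    (W : Fin m.natDegree → AdjoinRoot m) (hW : IsIntegralBasis σ W)
    (e : Polynomial K) (M : Matrix (Fin m.natDegree) (Fin m.natDegree) (Polynomial K))
    (hrel : DerivRel D W e M) (hgcd : GcdOne e M)
    (a : AlgebraicClosure K) (ha : Polynomial.aeval a e = 0) :
    ∃ i, IsBranchPointOf (σ a) (W i) :=
  exists_branch_point_of_root_of_e_general m D σ hσ W hW e M hrel hgcd a ha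
end
end

section
/- Let W = (ω_1,…,ω_n) be any K(x)-vector-space basis of A, and let e ∈ K[x] and M ∈ K[x]^{n×n} satisfy eW′ = MW. Let a ∈ K̄. If there exists some ω in W such that a is a branch point of ω, then a is a root of e. -/
/-! Suppose `e(a) ≠ 0` and fix an embedding `σ` under which some `ω ∈ W` is ramified. Let `d` be
the least fractional exponent occurring in any `σ(ωⱼ)`, attained by `ωₖ`. The images of elements
of `K[x]` only have natural exponents, so multiplying by them creates no fractional exponent
below `d`: the right-hand side `∑ⱼ σ(Mₖⱼ) σ(ωⱼ)` of the `k`-th row of `eW′ = MW` has no term in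
`(x - a)^(d - 1)`. On the left, `σ(ωₖ)′` has such a term with coefficient `d·c ≠ 0`, and `σ(e)`
multiplies it by its constant term `e(a) ≠ 0`, while no other product reaches that exponent. -/

noncomputable section
open scoped Classical

open Polynomial

namespace HahnSeries

variable {F : Type} [Field F]

theorem exists_mem_fracSupport_forall_mem_lowerBounds {ι : Type} [Fintype ι]
    (P : ι → HahnSeries ℚ F) (h : ∃ i, Ramified (P i)) :
    ∃ k, ∃ d ∈ fracSupport (P k), ∀ i, d ∈ lowerBounds (fracSupport (P i)) := by
  set S := Finset.univ.sup fun i => fracSupport (P i)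
  have hS : S.IsWF := (Finset.isWF_sup _).2 fun i _ =>
    (P i).isWF_support.mono fun _ hq => hq.1
  have hmem : ∀ q, q ∈ S ↔ ∃ i, q ∈ fracSupport (P i) := by
    simp [S, Finset.sup_set_eq_biUnion]
  obtain ⟨i, q, hq⟩ := h
  have hne : S.Nonempty := ⟨q, (hmem q).2 ⟨i, hq⟩⟩
  obtain ⟨k, hk⟩ := (hmem _).1 (hS.min_mem hne)
  exact ⟨k, _, hk, fun j _ hq => hS.min_le hne ((hmem _).2 ⟨j, hq⟩)⟩

theorem support_ofPowerSeries_subset (f : PowerSeries F) :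
    (ofPowerSeries ℚ F f).support ⊆ Set.range ((↑) : ℕ → ℚ) := by
  refine support_embDomain_subset.trans ?_
  rintro _ ⟨n, -, rfl⟩
  exact ⟨n, rfl⟩

theorem not_int_sub_natCast {q : ℚ} (hq : ∀ z : ℤ, (z : ℚ) ≠ q) (n : ℕ) :
    ∀ z : ℤ, (z : ℚ) ≠ q - n := fun z hz => hq (z + n) (by push_cast; linarith)

variable {P Q : HahnSeries ℚ F} {d q : ℚ}

theorem mem_lowerBounds_fracSupport_mul (hP : P.support ⊆ Set.range ((↑) : ℕ → ℚ))
    (hd : d ∈ lowerBounds (fracSupport Q)) : d ∈ lowerBounds (fracSupport (P * Q)) := by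
  rintro q ⟨hq, hqint⟩
  obtain ⟨n, hn, q₂, hq₂, rfl⟩ := support_mul_subset hq
  obtain ⟨n, rfl⟩ := hP hn
  have : d ≤ q₂ := hd ⟨hq₂, by simpa using not_int_sub_natCast hqint n⟩
  linarith [n.cast_nonneg (α := ℚ)]

theorem coeff_eq_zero_of_lt_of_mem_lowerBounds (hq : ∀ z : ℤ, (z : ℚ) ≠ q)
    (hd : d ∈ lowerBounds (fracSupport P)) (hqd : q < d) : P.coeff q = 0 := by
  by_contra h
  exact hqd.not_ge (hd ⟨h, hq⟩)

theorem coeff_mul_eq_of_mem_lowerBounds (hP : P.support ⊆ Set.range ((↑) : ℕ → ℚ))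
    (hq : ∀ z : ℤ, (z : ℚ) ≠ q) (hQ : q ∈ lowerBounds (fracSupport Q)) :
    (P * Q).coeff q = P.coeff 0 * Q.coeff q := by
  rw [coeff_mul, Finset.sum_eq_single (0, q)]
  · rintro ⟨_, q₂⟩ hmem hne
    obtain ⟨hn, hq₂, hsum⟩ := Finset.mem_antidiagonal.1 hmem
    obtain ⟨n, rfl⟩ := hP hn
    have : q ≤ q₂ := hQ ⟨hq₂, by simpa [← hsum] using not_int_sub_natCast hq n⟩
    obtain rfl : n = 0 := by exact_mod_cast (by linarith [n.cast_nonneg (α := ℚ)] : (n : ℚ) = 0)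
    exact absurd (by simpa using hsum) hne
  · intro h
    simpa [Finset.mem_antidiagonal, or_iff_not_imp_left] using h

theorem sub_one_mem_lowerBounds_fracSupport_hderiv (hd : d ∈ lowerBounds (fracSupport P)) :
    d - 1 ∈ lowerBounds (fracSupport (hderiv P)) := by
  rintro q ⟨hq, hqint⟩
  have hP : P.coeff (q + 1) ≠ 0 := fun h => hq (by simp [hderiv, h])
  have : d ≤ q + 1 := hd ⟨hP, fun z hz => hqint (z - 1) (by push_cast; linarith)⟩
  linarith

theorem hderiv_coeff_sub_one_ne_zero [CharZero F] (hd : d ∈ fracSupport P) :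
    (hderiv P).coeff (d - 1) ≠ 0 := by
  have hd0 : (d : F) ≠ 0 := Rat.cast_ne_zero.2 fun h => hd.2 0 (by simp [h])
  simpa [hderiv] using And.intro hd0 hd.1

end HahnSeries

namespace EmbFamily

variable {K F : Type} [Field K] [Field F] [Algebra K F] {m : Polynomial (RatFunc K)} {a : F}
  (σ : EmbFamily K F m a) (i : Fin m.natDegree) (p : Polynomial K)

theorem emb_toA_s1 :
    σ.emb i (toA m p) =
      HahnSeries.ofPowerSeries ℚ F (taylor a (p.map (algebraMap K F)) : PowerSeries F) := by
  let toAHom : Polynomial K →+* AdjoinRoot m :=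
    (algebraMap (RatFunc K) (AdjoinRoot m)).comp (algebraMap (Polynomial K) (RatFunc K))
  let taylorHom : Polynomial K →+* PowerSeries F :=
    (Polynomial.coeToPowerSeries.ringHom).comp
      ((taylorAlgHom a).toRingHom.comp (Polynomial.mapRingHom (algebraMap K F)))
  show ((σ.emb i).comp toAHom) p = ((HahnSeries.ofPowerSeries ℚ F).comp taylorHom) p
  congr 1
  refine Polynomial.ringHom_ext (fun c => ?_) ?_
  · change σ.emb i (toA m (C c)) = _
    simp [σ.emb_C, taylorHom]
  · change σ.emb i (toA m X) = _
    simp [σ.emb_X, taylorHom, add_comm]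

theorem support_emb_toA_subset : (σ.emb i (toA m p)).support ⊆ Set.range ((↑) : ℕ → ℚ) := by
  rw [σ.emb_toA_s1]
  exact HahnSeries.support_ofPowerSeries_subset _

theorem coeff_zero_emb_toA : (σ.emb i (toA m p)).coeff 0 = Polynomial.aeval a p := by
  have := HahnSeries.ofPowerSeries_apply_coeff (Γ := ℚ)
    (taylor a (p.map (algebraMap K F)) : PowerSeries F) 0
  rw [σ.emb_toA_s1]
  simpa [Polynomial.aeval_def, Polynomial.eval_map] using this

end EmbFamily

theorem root_of_e_of_branch_point_general {K : Type} [Field K] [CharZero K]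
    (m : Polynomial (RatFunc K))
    (D : AdjoinRoot m → AdjoinRoot m)
    (W : Fin m.natDegree → AdjoinRoot m)
    (e : Polynomial K) (M : Matrix (Fin m.natDegree) (Fin m.natDegree) (Polynomial K))
    (hrel : DerivRel D W e M)
    (a : AlgebraicClosure K) (σa : EmbFamily K (AlgebraicClosure K) m a)
    (hσa : IsDiffFamily D σa)
    (hbp : ∃ i, IsBranchPointOf σa (W i)) :
    Polynomial.aeval a e = 0 := by
  by_contra hea
  obtain ⟨i₀, ι, hram⟩ := hbp
  obtain ⟨k, d, hdk, hd⟩ :=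
    HahnSeries.exists_mem_fracSupport_forall_mem_lowerBounds (fun j => σa.emb ι (W j)) ⟨i₀, hram⟩
  have hd₁ : ∀ z : ℤ, (z : ℚ) ≠ d - 1 := by simpa using HahnSeries.not_int_sub_natCast hdk.2 1
  have hrelι := congrArg (σa.emb ι) (hrel k)
  simp only [map_mul, map_sum] at hrelι
  rw [hσa] at hrelι
  have hlhs : (σa.emb ι (toA m e) * hderiv (σa.emb ι (W k))).coeff (d - 1) ≠ 0 := by
    rw [HahnSeries.coeff_mul_eq_of_mem_lowerBounds (σa.support_emb_toA_subset ι e) hd₁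
      (HahnSeries.sub_one_mem_lowerBounds_fracSupport_hderiv (hd k)), σa.coeff_zero_emb_toA]
    exact mul_ne_zero hea (HahnSeries.hderiv_coeff_sub_one_ne_zero hdk)
  have hrhs : (∑ j, σa.emb ι (toA m (M k j)) * σa.emb ι (W j)).coeff (d - 1) = 0 := by
    rw [HahnSeries.coeff_sum]
    exact Finset.sum_eq_zero fun j _ => HahnSeries.coeff_eq_zero_of_lt_of_mem_lowerBounds hd₁
      (HahnSeries.mem_lowerBounds_fracSupport_mul (σa.support_emb_toA_subset ι _) (hd j))
      (sub_one_lt d)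
  exact hlhs (hrelι ▸ hrhs)

/-- Let `W = (ω₁,…,ωₙ)` be any `K(x)`-vector-space basis of `A`, and let
`e ∈ K[x]` and `M ∈ K[x]^{n×n}` satisfy `eW′ = MW`. Let `a ∈ K̄`. If there exists some `ω`
in `W` such that `a` is a branch point of `ω`, then `a` is a root of `e`. -/
theorem root_of_e_of_branch_point {K : Type} [Field K] [CharZero K]
    (m : Polynomial (RatFunc K)) [Fact (Irreducible m)]
    (D : AdjoinRoot m → AdjoinRoot m) (hD : IsDerivationOnA m D)
    (W : Fin m.natDegree → AdjoinRoot m) (hW : IsKxBasis W)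
    (e : Polynomial K) (M : Matrix (Fin m.natDegree) (Fin m.natDegree) (Polynomial K))
    (hrel : DerivRel D W e M)
    (a : AlgebraicClosure K) (σa : EmbFamily K (AlgebraicClosure K) m a)
    (hσa : IsDiffFamily D σa)
    (hbp : ∃ i, IsBranchPointOf σa (W i)) :
    Polynomial.aeval a e = 0 :=
  root_of_e_of_branch_point_general m D W e M hrel a σa hσa hbp
end
end

section
/- Let U and V be two K(x)-vector-space bases of A that generate the same K[x]-submodule of A. Let e_u, e_v ∈ K[x] be monic and M_u, M_v ∈ K[x]^{n×n} be such that e_u U′ = M_u U and e_v V′ = M_v V, where gcd(e_u, entries of M_u) = 1 and gcd(e_v, entries of M_v) = 1. Then e_u = e_v; i.e., the polynomial e depends only on the K[x]-submodule generated by the basis, not on the basis itself. -/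
noncomputable section
open scoped Classical
open Polynomial

-- auxiliary lemma
theorem dvd_aux {K : Type} [Field K] {m : Polynomial (RatFunc K)}
    {D : AdjoinRoot m → AdjoinRoot m} (hD : IsDerivationOnA m D)
    {U V : Fin m.natDegree → AdjoinRoot m}
    (hUli : LinearIndependent (RatFunc K) U)
    (P Q : Matrix (Fin m.natDegree) (Fin m.natDegree) (Polynomial K))
    (hP : ∀ i, V i = ∑ j, toA m (P i j) * U j)
    (hQ : ∀ i, U i = ∑ j, toA m (Q i j) * V j)
    {eu ev : Polynomial K}
    {Mu Mv : Matrix (Fin m.natDegree) (Fin m.natDegree) (Polynomial K)}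
    (heu : eu ≠ 0) (hev : ev ≠ 0)
    (hrelU : DerivRel D U eu Mu) (hrelV : DerivRel D V ev Mv)
    (hgcdV : GcdOne ev Mv) : ev ∣ eu := by
  classical
  -- toA as ring hom facts
  have htA : ∀ p q : Polynomial K, toA m (p * q) = toA m p * toA m q := by
    intro p q; simp [toA, map_mul]
  have htAadd : ∀ p q : Polynomial K, toA m (p + q) = toA m p + toA m q := by
    intro p q; simp [toA, map_add]
  have htAsum : ∀ (f : Fin m.natDegree → Polynomial K), toA m (∑ j, f j) = ∑ j, toA m (f j) := by
    intro f; simp [toA, map_sum]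
  -- coefficient extraction
  have hcoeff : ∀ a b : Fin m.natDegree → Polynomial K,
      (∑ k, toA m (a k) * U k) = (∑ k, toA m (b k) * U k) → ∀ k, a k = b k := by
    intro a b h k
    have h2 : ∑ k, ((algebraMap (Polynomial K) (RatFunc K)) (a k)
        - (algebraMap (Polynomial K) (RatFunc K)) (b k)) • U k = 0 := by
      calc ∑ k, ((algebraMap (Polynomial K) (RatFunc K)) (a k)
            - (algebraMap (Polynomial K) (RatFunc K)) (b k)) • U k
          = ∑ k, (toA m (a k) * U k - toA m (b k) * U k) := by
            refine Finset.sum_congr rfl fun k _ => ?_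
            rw [sub_smul, Algebra.smul_def, Algebra.smul_def]; rfl
        _ = 0 := by rw [Finset.sum_sub_distrib, sub_eq_zero]; exact h
    have h3 := linearIndependent_iff'.mp hUli Finset.univ _ h2 k (Finset.mem_univ k)
    have h4 : (algebraMap (Polynomial K) (RatFunc K)) (a k)
        = (algebraMap (Polynomial K) (RatFunc K)) (b k) := by
      rwa [sub_eq_zero] at h3
    exact IsFractionRing.injective (Polynomial K) (RatFunc K) h4
  -- Q * P = 1
  have hQP : Q * P = 1 := by
    refine Matrix.ext fun i k => ?_
    have expand : U i = ∑ k, toA m (∑ j, Q i j * P j k) * U k := by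
      calc U i = ∑ j, toA m (Q i j) * V j := hQ i
        _ = ∑ j, ∑ k, toA m (Q i j * P j k) * U k := by
            refine Finset.sum_congr rfl fun j _ => ?_
            rw [hP j, Finset.mul_sum]
            refine Finset.sum_congr rfl fun k _ => ?_
            simp only [htA]; ring
        _ = ∑ k, ∑ j, toA m (Q i j * P j k) * U k := Finset.sum_comm
        _ = ∑ k, toA m (∑ j, Q i j * P j k) * U k := by
            refine Finset.sum_congr rfl fun k _ => ?_
            rw [htAsum, Finset.sum_mul]
    have triv : U i = ∑ k, toA m (if i = k then 1 else 0) * U k := by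
      simp [toA, apply_ite (algebraMap (Polynomial K) (RatFunc K)),
        apply_ite (algebraMap (RatFunc K) (AdjoinRoot m))]
    have := hcoeff _ _ (triv.symm.trans expand) k
    rw [Matrix.mul_apply, Matrix.one_apply, ← this]
  have hPQ : P * Q = 1 := mul_eq_one_comm.mpr hQP
  have hPQ' : ∀ j l, (∑ k, P j k * Q k l) = if j = l then 1 else 0 := by
    intro j l
    have := congrFun (congrFun hPQ j) l
    rwa [Matrix.mul_apply, Matrix.one_apply] at this
  -- derivative of V i in terms of U
  have Dhom : ∀ (f : Fin m.natDegree → AdjoinRoot m), D (∑ j, f j) = ∑ j, D (f j) := by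
    intro f
    exact map_sum (AddMonoidHom.mk' D hD.map_add) f Finset.univ
  have hDV : ∀ i, D (V i) = ∑ j, (toA m (P i j) * D (U j)
      + toA m (derivative (P i j)) * U j) := by
    intro i
    rw [hP i, Dhom]
    refine Finset.sum_congr rfl fun j _ => ?_
    rw [hD.leibniz, hD.map_poly]; ring
  -- key identity
  have key : ∀ i k, eu * (∑ j, Mv i j * P j k)
      = ev * ((∑ j, P i j * Mu j k) + eu * derivative (P i k)) := by
    intro i k
    have E1 : toA m eu * (toA m ev * D (V i))
        = ∑ k, toA m (eu * ∑ j, Mv i j * P j k) * U k := by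
      calc toA m eu * (toA m ev * D (V i))
          = toA m eu * ∑ j, toA m (Mv i j) * V j := by rw [hrelV i]
        _ = ∑ j, ∑ k, toA m (eu * (Mv i j * P j k)) * U k := by
            rw [Finset.mul_sum]
            refine Finset.sum_congr rfl fun j _ => ?_
            rw [hP j, Finset.mul_sum, Finset.mul_sum]
            refine Finset.sum_congr rfl fun k _ => ?_
            simp only [htA]; ring
        _ = ∑ k, ∑ j, toA m (eu * (Mv i j * P j k)) * U k := Finset.sum_comm
        _ = ∑ k, toA m (eu * ∑ j, Mv i j * P j k) * U k := by
            refine Finset.sum_congr rfl fun k _ => ?_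
            rw [Finset.mul_sum, htAsum, Finset.sum_mul]
    have E2 : toA m eu * (toA m ev * D (V i))
        = ∑ k, toA m (ev * ((∑ j, P i j * Mu j k) + eu * derivative (P i k))) * U k := by
      calc toA m eu * (toA m ev * D (V i))
          = ∑ j, (toA m (ev * P i j) * (toA m eu * D (U j))
              + toA m (eu * ev * derivative (P i j)) * U j) := by
            rw [hDV i, Finset.mul_sum, Finset.mul_sum]
            refine Finset.sum_congr rfl fun j _ => ?_
            simp only [htA]; ring
        _ = ∑ j, (∑ k, toA m (ev * (P i j * Mu j k)) * U k
              + toA m (eu * ev * derivative (P i j)) * U j) := by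
            refine Finset.sum_congr rfl fun j _ => ?_
            rw [hrelU j, Finset.mul_sum]
            congr 1
            refine Finset.sum_congr rfl fun k _ => ?_
            simp only [htA]; ring
        _ = (∑ j, ∑ k, toA m (ev * (P i j * Mu j k)) * U k)
              + ∑ j, toA m (eu * ev * derivative (P i j)) * U j := by
            rw [Finset.sum_add_distrib]
        _ = (∑ k, toA m (ev * ∑ j, P i j * Mu j k) * U k)
              + ∑ k, toA m (ev * (eu * derivative (P i k))) * U k := by
            congr 1
            · rw [Finset.sum_comm]
              refine Finset.sum_congr rfl fun k _ => ?_
              rw [Finset.mul_sum, htAsum, Finset.sum_mul]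
            · refine Finset.sum_congr rfl fun k _ => ?_
              ring_nf
        _ = ∑ k, toA m (ev * ((∑ j, P i j * Mu j k) + eu * derivative (P i k))) * U k := by
            rw [← Finset.sum_add_distrib]
            refine Finset.sum_congr rfl fun k _ => ?_
            rw [mul_add, htAadd, add_mul]
    exact hcoeff _ _ (E1.symm.trans E2) k
  -- multiply key by Q on the right
  set N : Matrix (Fin m.natDegree) (Fin m.natDegree) (Polynomial K) :=
    fun i l => ∑ k, ((∑ j, P i j * Mu j k) + eu * derivative (P i k)) * Q k l with hN
  have main : ∀ i l, eu * Mv i l = ev * N i l := by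
    intro i l
    have h1 : ∑ k, (eu * (∑ j, Mv i j * P j k)) * Q k l
        = ∑ k, (ev * ((∑ j, P i j * Mu j k) + eu * derivative (P i k))) * Q k l := by
      refine Finset.sum_congr rfl fun k _ => ?_
      rw [key i k]
    have h2 : ∑ k, (eu * (∑ j, Mv i j * P j k)) * Q k l = eu * Mv i l := by
      calc ∑ k, (eu * (∑ j, Mv i j * P j k)) * Q k l
          = ∑ k, ∑ j, eu * (Mv i j * (P j k * Q k l)) := by
            refine Finset.sum_congr rfl fun k _ => ?_
            simp only [Finset.mul_sum, Finset.sum_mul]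
            exact Finset.sum_congr rfl fun j _ => by ring
        _ = ∑ j, ∑ k, eu * (Mv i j * (P j k * Q k l)) := Finset.sum_comm
        _ = ∑ j, eu * (Mv i j * ∑ k, P j k * Q k l) := by
            refine Finset.sum_congr rfl fun j _ => ?_
            rw [Finset.mul_sum, Finset.mul_sum]
        _ = eu * Mv i l := by
            rw [Finset.sum_congr rfl fun j _ => by rw [hPQ' j l]]
            simp
    have h3 : ∑ k, (ev * ((∑ j, P i j * Mu j k) + eu * derivative (P i k))) * Q k l
        = ev * N i l := by
      rw [hN, Finset.mul_sum]
      refine Finset.sum_congr rfl fun k _ => ?_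
      ring
    rw [← h2, h1, h3]
  -- gcd argument
  set d := GCDMonoid.gcd eu ev with hd
  have hdvd1 : d ∣ eu := gcd_dvd_left eu ev
  have hdvd2 : d ∣ ev := gcd_dvd_right eu ev
  have hdne : d ≠ 0 := gcd_ne_zero_of_left heu
  set a := eu / d with ha
  set b := ev / d with hb
  have hea : eu = d * a := (EuclideanDomain.mul_div_cancel' hdne hdvd1).symm
  have heb : ev = d * b := (EuclideanDomain.mul_div_cancel' hdne hdvd2).symm
  have hcop : IsCoprime a b := isCoprime_div_gcd_div_gcd hev
  have bdvd : ∀ i j, b ∣ Mv i j := by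
    intro i j
    have h := main i j
    rw [hea, heb] at h
    have h' : a * Mv i j = b * N i j := by
      apply mul_left_cancel₀ hdne
      rw [← mul_assoc, ← mul_assoc]
      exact h
    exact hcop.symm.dvd_of_dvd_mul_left ⟨N i j, h'⟩
  have hbev : b ∣ ev := ⟨d, by rw [heb]; ring⟩
  have hbu : IsUnit b := hgcdV b hbev bdvd
  obtain ⟨c, hc⟩ := isUnit_iff_exists_inv.mp hbu
  have hevd : ev ∣ d := ⟨c, by rw [heb, mul_assoc, hc, mul_one]⟩
  exact dvd_trans hevd hdvd1


/-- Let `U` and `V` be two `K(x)`-vector-space bases of `A` that generate the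
same `K[x]`-submodule of `A`. Let `e_u, e_v ∈ K[x]` be monic and `M_u, M_v ∈ K[x]^{n×n}` be
such that `e_u U′ = M_u U` and `e_v V′ = M_v V`, where `gcd(e_u, entries of M_u) = 1` and
`gcd(e_v, entries of M_v) = 1`. Then `e_u = e_v`: the polynomial `e` depends only on the
`K[x]`-submodule generated by the basis, not on the basis itself. -/
theorem e_depends_only_on_module {K : Type} [Field K] [CharZero K]
    (m : Polynomial (RatFunc K)) [Fact (Irreducible m)]
    (D : AdjoinRoot m → AdjoinRoot m) (hD : IsDerivationOnA m D)
    (U V : Fin m.natDegree → AdjoinRoot m)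
    (hU : IsKxBasis U) (hV : IsKxBasis V)
    -- `U` and `V` generate the same `K[x]`-submodule of `A`:
    (hmod : ∀ f : AdjoinRoot m,
      (∃ c : Fin m.natDegree → Polynomial K, f = ∑ i, toA m (c i) * U i) ↔
      (∃ c : Fin m.natDegree → Polynomial K, f = ∑ i, toA m (c i) * V i))
    (eu ev : Polynomial K)
    (Mu Mv : Matrix (Fin m.natDegree) (Fin m.natDegree) (Polynomial K))
    (heu : eu.Monic) (hev : ev.Monic)
    (hrelU : DerivRel D U eu Mu) (hgcdU : GcdOne eu Mu)
    (hrelV : DerivRel D V ev Mv) (hgcdV : GcdOne ev Mv) :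
    eu = ev := by
  classical
  have hdelta : ∀ (W : Fin m.natDegree → AdjoinRoot m) (i : Fin m.natDegree),
      W i = ∑ j, toA m (if i = j then 1 else 0) * W j := by
    intro W i
    simp [toA, apply_ite (algebraMap (Polynomial K) (RatFunc K)),
      apply_ite (algebraMap (RatFunc K) (AdjoinRoot m))]
  have hPex : ∀ i, ∃ c : Fin m.natDegree → Polynomial K, V i = ∑ j, toA m (c j) * U j := by
    intro i
    exact (hmod (V i)).mpr ⟨fun j => if i = j then 1 else 0, hdelta V i⟩
  have hQex : ∀ i, ∃ c : Fin m.natDegree → Polynomial K, U i = ∑ j, toA m (c j) * V j := by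
    intro i
    exact (hmod (U i)).mp ⟨fun j => if i = j then 1 else 0, hdelta U i⟩
  choose P hP using hPex
  choose Q hQ using hQex
  have h1 : ev ∣ eu :=
    dvd_aux hD hU.1 (Matrix.of P) (Matrix.of Q) hP hQ heu.ne_zero hev.ne_zero hrelU hrelV hgcdV
  have h2 : eu ∣ ev :=
    dvd_aux hD hV.1 (Matrix.of Q) (Matrix.of P) hQ hP hev.ne_zero heu.ne_zero hrelV hrelU hgcdU
  exact eq_of_monic_of_associated heu hev (associated_of_dvd_dvd h2 h1)
end
end

section
/- Let W = (ω_1,…,ω_n) be a basis of A with eW′ = MW, and let h = Σ_{i=1}^n (h_i/(de)) ω_i with h_i, d ∈ K[x], gcd(d, e) = 1, gcd(h_1,…,h_n, d) = 1, and d squarefree. If h is integrable in A (i.e., h = H′ for some H ∈ A) and W is a local integral basis at a ∈ K̄, then d has no root at a. -/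
/-!
Write `H = Σ (p_i/q) ω_i` with `p_i, q ∈ K[x]`. As `gcd(d, e) = 1`, `e(a) ≠ 0`, so the system
`eW′ = MW` is regular at `a`, and differentiating `H` raises the pole order of its coefficients
at `a` by exactly one: if `q` vanishes to order `β ≥ 1` at `a` while some `p_i` does not, then
`H′` has a pole of order `β + 1 ≥ 2` there. But if `d(a) = 0`, then `h` has a pole of order
exactly one at `a`, since `d` is squarefree and `gcd(h_1, …, h_n, d) = 1`.
With denominators cleared, `q² h_j = d (e (p_j′ q − p_j q′) + q Σ_i p_i M_ij)` forces
`q(a) = 0` and then `p_i(a) = 0` for all `i`, and dividing `p` and `q` by `x − a` gives an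
infinite descent.
-/

noncomputable section
open scoped Classical

open Polynomial

theorem exists_smul_eq_linearCombination_of_span_eq_top {R F V ι : Type*} [CommRing R] [Field F]
    [Algebra R F] [IsFractionRing R F] [AddCommGroup V] [Module F V] [Module R V]
    [IsScalarTower R F V] [Fintype ι] {v : ι → V} (hv : Submodule.span F (Set.range v) = ⊤)
    (x : V) : ∃ q ∈ nonZeroDivisors R, ∃ p : ι → R, q • x = Fintype.linearCombination R v p := by
  obtain ⟨f, rfl⟩ :=
    (Submodule.mem_span_range_iff_exists_fun F).mp (hv ▸ Submodule.mem_top (x := x))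
  obtain ⟨q, hq⟩ := IsLocalization.exist_integer_multiples (nonZeroDivisors R) Finset.univ f
  choose p hp using fun i => hq i (Finset.mem_univ i)
  refine ⟨q, q.2, p, ?_⟩
  simp only [Fintype.linearCombination_apply, Finset.smul_sum, ← smul_assoc, ← hp,
    algebraMap_smul]

theorem exists_aeval_ne_zero_of_aeval_eq_zero {K L ι : Type*} [Field K] [Field L] [Algebra K L]
    {a : L} (ha : IsIntegral K a) {d : K[X]} (hd : aeval a d = 0) {c : ι → K[X]}
    (hdc : ∀ p : K[X], p ∣ d → (∀ i, p ∣ c i) → IsUnit p) : ∃ i, aeval a (c i) ≠ 0 := by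
  by_contra! hc
  exact (minpoly.irreducible ha).not_isUnit
    (hdc _ (minpoly.dvd K a hd) fun i => minpoly.dvd K a (hc i))

section ClearedDerivative

variable {L : Type*} [Field L] {n : ℕ}

/-- `Σ c_j/(dE) ω_j = (Σ P_j/Q ω_j)′` for a basis with `E ω′ = M ω`, with denominators cleared. -/
def IsClearedDerivEq (d E : L[X]) (c : Fin n → L[X]) (M : Matrix (Fin n) (Fin n) L[X])
    (P : Fin n → L[X]) (Q : L[X]) : Prop :=
  ∀ j, Q ^ 2 * c j =
    d * (E * (derivative (P j) * Q - P j * derivative Q) + Q * ∑ i, P i * M i j)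

theorem IsClearedDerivEq.map {K : Type*} [Field K] {d E Q : K[X]} {c P : Fin n → K[X]}
    {M : Matrix (Fin n) (Fin n) K[X]} (h : IsClearedDerivEq d E c M P Q) (f : K →+* L) :
    IsClearedDerivEq (d.map f) (E.map f) (fun j => (c j).map f) (M.map (Polynomial.map f))
      (fun j => (P j).map f) (Q.map f) := by
  intro j
  simpa only [Polynomial.map_mul, Polynomial.map_add, Polynomial.map_sub, Polynomial.map_pow,
    Polynomial.map_sum, derivative_map, Matrix.map_apply] using congrArg (Polynomial.map f) (h j)

variable {d E Q : L[X]} {c P : Fin n → L[X]} {M : Matrix (Fin n) (Fin n) L[X]}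

theorem IsClearedDerivEq.of_mul {g : L[X]} (hg : g ≠ 0)
    (h : IsClearedDerivEq d E c M (fun j => g * P j) (g * Q)) : IsClearedDerivEq d E c M P Q := by
  intro j
  refine mul_left_cancel₀ (pow_ne_zero 2 hg) ?_
  have hsum : ∑ i, g * P i * M i j = g * ∑ i, P i * M i j := by
    simp only [Finset.mul_sum, mul_assoc]
  have hj := h j
  simp only [derivative_mul, hsum] at hj
  linear_combination hj

theorem IsClearedDerivEq.isRoot_denominator {a : L} {j : Fin n} (h : IsClearedDerivEq d E c M P Q)
    (hd : d.IsRoot a) (hc : (c j).eval a ≠ 0) : Q.IsRoot a := by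
  have hj := congrArg (eval a) (h j)
  rw [eval_mul, eval_mul, eval_pow, hd.eq_zero, zero_mul, mul_eq_zero] at hj
  exact pow_eq_zero_iff two_ne_zero |>.mp (hj.resolve_right hc)

/-- Comparing orders at `a`: if `P_j(a) ≠ 0`, the term `−d E P_j Q′` vanishes to order exactly
`ord_a Q` (as `a` is a simple root of `d`), while all other terms vanish to higher order. -/
theorem IsClearedDerivEq.isRoot_numerator [CharZero L] {a : L} (h : IsClearedDerivEq d E c M P Q)
    (hd : d.IsRoot a) (hd' : (derivative d).eval a ≠ 0) (hE : E.eval a ≠ 0) (hQ : Q ≠ 0)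
    (hQa : Q.IsRoot a) (j : Fin n) : (P j).IsRoot a := by
  obtain ⟨d₁, rfl⟩ := dvd_iff_isRoot.mpr hd
  obtain ⟨Q₁, hQ₁, hQ₁a⟩ := Q.exists_eq_pow_rootMultiplicity_mul_and_not_dvd hQ a
  obtain ⟨b, hb⟩ := Nat.exists_eq_add_one.mpr ((rootMultiplicity_pos hQ).mpr hQa)
  rw [hb] at hQ₁
  have hQ' : derivative Q =
      (X - C a) ^ b * (C ((b : L) + 1) * Q₁ + (X - C a) * derivative Q₁) := by
    rw [hQ₁, derivative_mul, derivative_X_sub_C_pow]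
    simp only [Nat.cast_add, Nat.cast_one, map_add, map_natCast, map_one, add_tsub_cancel_right]
    ring
  have hcancel : (X - C a) ^ (b + 1) * ((X - C a) ^ (b + 1) * Q₁ ^ 2 * c j) =
      (X - C a) ^ (b + 1) * (d₁ * (E * ((X - C a) * derivative (P j) * Q₁
        - P j * (C ((b : L) + 1) * Q₁ + (X - C a) * derivative Q₁))
        + (X - C a) * Q₁ * ∑ i, P i * M i j)) := by
    have hj := h j
    rw [hQ', hQ₁] at hj
    linear_combination hj
  have hj : eval a d₁ * eval a E * (((b : L) + 1) * eval a Q₁) * eval a (P j) = 0 := by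
    have hj := congrArg (eval a) (mul_left_cancel₀ (pow_ne_zero _ (X_sub_C_ne_zero a)) hcancel)
    simp only [eval_mul, eval_add, eval_sub, eval_pow, eval_X, eval_C, sub_self,
      zero_pow (Nat.succ_ne_zero b), zero_mul] at hj
    linear_combination hj
  have hd₁ : d₁.eval a ≠ 0 := by simpa [derivative_mul] using hd'
  have hb1 : (b : L) + 1 ≠ 0 := by exact_mod_cast Nat.succ_ne_zero b
  have hQ₁a' : Q₁.eval a ≠ 0 := fun h0 => hQ₁a (dvd_iff_isRoot.mpr h0)
  exact (mul_eq_zero.mp hj).resolve_left (by simp [hd₁, hE, hb1, hQ₁a'])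

/-- Infinite descent: `P` and `Q` always share the factor `X − a`, and cancelling it lowers
`deg Q`. -/
theorem IsClearedDerivEq.eq_zero [CharZero L] {a : L} {j₀ : Fin n}
    (h : IsClearedDerivEq d E c M P Q) (hd : d.IsRoot a) (hd' : (derivative d).eval a ≠ 0)
    (hE : E.eval a ≠ 0) (hc : (c j₀).eval a ≠ 0) : Q = 0 := by
  induction hk : Q.natDegree using Nat.strong_induction_on generalizing P Q with
  | _ k ih =>
    by_contra hQ
    have hQa := h.isRoot_denominator hd hc
    obtain ⟨S, rfl⟩ := dvd_iff_isRoot.mpr hQa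
    choose R hR using fun j => dvd_iff_isRoot.mpr (h.isRoot_numerator hd hd' hE hQ hQa j)
    rw [funext hR] at h
    have hS : S ≠ 0 := right_ne_zero_of_mul hQ
    refine hS (ih S.natDegree ?_ (h.of_mul (X_sub_C_ne_zero a)) rfl)
    rw [← hk, natDegree_mul (X_sub_C_ne_zero a) hS, natDegree_X_sub_C]
    omega

end ClearedDerivative

section DerivationOnA

variable {K : Type} [Field K] {m : Polynomial (RatFunc K)}

theorem toA_mul_eq_smul (p : K[X]) (w : AdjoinRoot m) : toA m p * w = p • w := by
  rw [Algebra.smul_def]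
  rfl

theorem toA_mul (p q : K[X]) : toA m (p * q) = toA m p * toA m q := by
  simp only [toA, map_mul]

variable {D : AdjoinRoot m → AdjoinRoot m}

theorem IsDerivationOnA.map_sum (hD : IsDerivationOnA m D) {ι : Type*} (s : Finset ι)
    (f : ι → AdjoinRoot m) : D (∑ i ∈ s, f i) = ∑ i ∈ s, D (f i) :=
  _root_.map_sum (AddMonoidHom.mk' D hD.map_add) f s

theorem IsDerivationOnA.map_smul (hD : IsDerivationOnA m D) (p : K[X]) (w : AdjoinRoot m) :
    D (p • w) = p • D w + derivative p • w := by
  rw [← toA_mul_eq_smul, hD.leibniz, hD.map_poly, mul_comm w, toA_mul_eq_smul, toA_mul_eq_smul]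

theorem DerivRel.smul_deriv_linearCombination (hD : IsDerivationOnA m D)
    {W : Fin m.natDegree → AdjoinRoot m} {e : K[X]}
    {M : Matrix (Fin m.natDegree) (Fin m.natDegree) K[X]} (hrel : DerivRel D W e M)
    (f : Fin m.natDegree → K[X]) :
    e • D (Fintype.linearCombination K[X] W f) =
      Fintype.linearCombination K[X] W (fun j => ∑ i, f i * M i j + e * derivative (f j)) := by
  have hrel' : ∀ i, e • D (W i) = ∑ j, M i j • W j := fun i => by
    simpa only [toA_mul_eq_smul] using hrel i
  simp only [Fintype.linearCombination_apply, hD.map_sum, hD.map_smul, smul_add, Finset.smul_sum,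
    smul_comm e (f _), hrel', add_smul, Finset.sum_add_distrib, Finset.sum_smul, mul_smul]
  rw [Finset.sum_comm]

theorem isClearedDerivEq_of_eq_deriv (hD : IsDerivationOnA m D)
    {W : Fin m.natDegree → AdjoinRoot m} (hW : LinearIndependent (RatFunc K) W) {e : K[X]}
    {M : Matrix (Fin m.natDegree) (Fin m.natDegree) K[X]} (hrel : DerivRel D W e M)
    {d q : K[X]} {c p : Fin m.natDegree → K[X]} {H : AdjoinRoot m}
    (hrep : toA m d * toA m e * D H = ∑ i, toA m (c i) * W i)
    (hH : q • H = Fintype.linearCombination K[X] W p) :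
    IsClearedDerivEq d e c M p q := by
  set Φ := Fintype.linearCombination K[X] W
  have hΦ : Function.Injective Φ :=
    linearIndependent_iff_injective_fintypeLinearCombination.mp (hW.restrict_scalars' K[X])
  have hc : Φ c = (d * e) • D H := by
    rw [← toA_mul_eq_smul, toA_mul, hrep]
    simp only [Φ, Fintype.linearCombination_apply, toA_mul_eq_smul]
  suffices Φ (fun j => q ^ 2 * c j) = Φ (fun j =>
      d * (e * (derivative (p j) * q - p j * derivative q) + q * ∑ i, p i * M i j)) from
    fun j => congrFun (hΦ this) j
  calc Φ (fun j => q ^ 2 * c j)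
      = (d * q) • (e • D (q • H)) - (d * e * derivative q) • (q • H) := by
        rw [hD.map_smul, show (fun j => q ^ 2 * c j) = q ^ 2 • c from rfl, map_smul, hc]
        module
    _ = (d * q) • Φ (fun j => ∑ i, p i * M i j + e * derivative (p j))
          - (d * e * derivative q) • Φ p := by
        rw [hH, hrel.smul_deriv_linearCombination hD]
    _ = _ := by
        rw [← map_smul, ← map_smul, ← map_sub]
        congr 1
        funext j
        simp only [Pi.sub_apply, Pi.smul_apply, smul_eq_mul]
        ring

end DerivationOnA

theorem no_root_of_d_of_integrable_local_general {K : Type} [Field K] [CharZero K]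
    (m : Polynomial (RatFunc K))
    (D : AdjoinRoot m → AdjoinRoot m) (hD : IsDerivationOnA m D)
    (W : Fin m.natDegree → AdjoinRoot m)
    (e : Polynomial K) (M : Matrix (Fin m.natDegree) (Fin m.natDegree) (Polynomial K))
    (hrel : DerivRel D W e M)
    (h : AdjoinRoot m) (hc : Fin m.natDegree → Polynomial K) (d : Polynomial K)
    -- `h = Σ (h_i/(de)) ω_i`:
    (hrep : toA m d * toA m e * h = ∑ i, toA m (hc i) * W i)
    (hde : IsCoprime d e)
    (hhd : ∀ p : Polynomial K, p ∣ d → (∀ i, p ∣ hc i) → IsUnit p)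
    (hdsqf : Squarefree d)
    -- `h` is integrable in `A`:
    (hint : ∃ H : AdjoinRoot m, h = D H)
    -- `W` is a local integral basis at `a`:
    (a : AlgebraicClosure K) (σa : EmbFamily K (AlgebraicClosure K) m a)
    (hWloc : IsLocalIntegralBasisAt σa W) :
    Polynomial.aeval a d ≠ 0 := by
  intro hda
  obtain ⟨H, rfl⟩ := hint
  obtain ⟨⟨hWli, hWspan⟩, -, -⟩ := hWloc
  obtain ⟨q, hq, p, hH⟩ := exists_smul_eq_linearCombination_of_span_eq_top (R := K[X]) hWspan H
  have hea : aeval a e ≠ 0 := (aeval_ne_zero_of_isCoprime hde a).resolve_left (not_not.mpr hda)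
  have hd' : aeval a (derivative d) ≠ 0 :=
    (PerfectField.separable_iff_squarefree.mpr hdsqf).aeval_derivative_ne_zero hda
  obtain ⟨j₀, hj₀⟩ :=
    exists_aeval_ne_zero_of_aeval_eq_zero (Algebra.IsIntegral.isIntegral a) hda hhd
  have hcleared := (isClearedDerivEq_of_eq_deriv hD hWli hrel hrep hH).map
    (algebraMap K (AlgebraicClosure K))
  have hqmap : q.map (algebraMap K (AlgebraicClosure K)) = 0 := by
    refine hcleared.eq_zero (a := a) (j₀ := j₀) ?_ ?_ ?_ ?_ <;>
      simpa only [IsRoot.def, derivative_map, eval_map_algebraMap]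
  exact nonZeroDivisors.ne_zero hq ((Polynomial.map_eq_zero _).mp hqmap)

/-- Let `W = (ω₁,…,ωₙ)` be a basis of `A` with `eW′ = MW`, and let
`h = Σ (h_i/(de)) ω_i` with `h_i, d ∈ K[x]`, `gcd(d, e) = 1`, `gcd(h₁,…,hₙ, d) = 1`, and `d`
squarefree. If `h` is integrable in `A` (i.e. `h = H′` for some `H ∈ A`) and `W` is a local
integral basis at `a ∈ K̄`, then `d` has no root at `a`. -/
theorem no_root_of_d_of_integrable_local {K : Type} [Field K] [CharZero K]
    (m : Polynomial (RatFunc K)) [Fact (Irreducible m)]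
    (D : AdjoinRoot m → AdjoinRoot m) (hD : IsDerivationOnA m D)
    (W : Fin m.natDegree → AdjoinRoot m)
    (e : Polynomial K) (M : Matrix (Fin m.natDegree) (Fin m.natDegree) (Polynomial K))
    (hrel : DerivRel D W e M) (hgcd : GcdOne e M)
    (h : AdjoinRoot m) (hc : Fin m.natDegree → Polynomial K) (d : Polynomial K)
    (hd0 : d ≠ 0) (he0 : e ≠ 0)
    -- `h = Σ (h_i/(de)) ω_i`:
    (hrep : toA m d * toA m e * h = ∑ i, toA m (hc i) * W i)
    (hde : IsCoprime d e)
    (hhd : ∀ p : Polynomial K, p ∣ d → (∀ i, p ∣ hc i) → IsUnit p)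
    (hdsqf : Squarefree d)
    -- `h` is integrable in `A`:
    (hint : ∃ H : AdjoinRoot m, h = D H)
    -- `W` is a local integral basis at `a`:
    (a : AlgebraicClosure K) (σa : EmbFamily K (AlgebraicClosure K) m a)
    (hσa : IsDiffFamily D σa)
    (hWloc : IsLocalIntegralBasisAt σa W) :
    Polynomial.aeval a d ≠ 0 :=
  no_root_of_d_of_integrable_local_general m D hD W e M hrel h hc d hrep hde hhd hdsqf hint a σa
    hWloc
end
end
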